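/- If u is a composition of d with l = ℓ(u) > s, then the projection P^{d-l} : H_s^u(f) → ℝ^{l-s} that records the coefficients h_{s+1}, ..., h_l (forgetting the last d-l coefficients) is a homeomorphism onto its image, and the image P^{d-l}(H_s^u(f)) is closed in ℝ^{l-s}. -/

import Mathlib

noncomputable section

open Polynomial

/-- The set of partial sums `{u₁, u₁+u₂, …, d}` of a composition `u` of `d`. -/
def Composition.sums {d : ℕ} (u : Composition d) : Finset ℕ :=
  (Finset.range u.length).image fun i => u.sizeUpTo (i + 1)

/-- `CompLe v u` : the partial order on compositions of `d`; `v ≤ u` iff the set of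
partial sums of `v` is contained in the set of partial sums of `u` (equivalently, `v` is
obtained from `u` by merging blocks of consecutive parts into their sums). -/
def CompLe {d : ℕ} (v u : Composition d) : Prop := v.sums ⊆ u.sums

/-- A real univariate polynomial is hyperbolic if all of its roots are real, i.e. it has
`natDegree` many real roots counted with multiplicity. -/
def Hyperbolic (p : ℝ[X]) : Prop := p.roots.card = p.natDegree

/-- `HasComposition h u` : the composition `v(h)` of the hyperbolic polynomial `h`
(the tuple of multiplicities of its increasingly ordered distinct roots) equals `u`. -/
def HasComposition {d : ℕ} (h : ℝ[X]) (u : Composition d) : Prop :=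
  ∃ a : Fin u.length → ℝ, StrictMono a ∧
    h = ∏ i, (X - C (a i)) ^ u.blocksFun i

/-- `Hset d s f` is `H_s(f)` : the monic hyperbolic polynomials of degree `d` whose
coefficients `h_i = coeff (d-i)` agree with those of `f` for all `i ≤ s`. -/
def Hset (d s : ℕ) (f : ℝ[X]) : Set ℝ[X] :=
  {h | h.Monic ∧ h.natDegree = d ∧ Hyperbolic h ∧
    ∀ j, d - s ≤ j → h.coeff j = f.coeff j}

/-- `HSu d s f u` is the stratum `H_s^u(f) = {h ∈ H_s(f) | v(h) ≤ u}`. -/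
def HSu (d s : ℕ) (f : ℝ[X]) (u : Composition d) : Set ℝ[X] :=
  {h | h ∈ Hset d s f ∧ ∃ w : Composition d, CompLe w u ∧ HasComposition h w}

/-- The identification of `h ∈ H_s(f)` with `(h_{s+1}, …, h_d) ∈ ℝ^{d-s}` :
coordinate `i` is `h_{s+1+i}`, i.e. the coefficient of `t^{d-s-1-i}`. -/
def coeffVec (d s : ℕ) (h : ℝ[X]) : Fin (d - s) → ℝ :=
  fun i => h.coeff (d - s - 1 - i.val)

/-- The stratum `H_s^u(f)`, identified with a subset of `ℝ^{d-s}`. -/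
def strataSet (d s : ℕ) (f : ℝ[X]) (u : Composition d) : Set (Fin (d - s) → ℝ) :=
  coeffVec d s '' HSu d s f u

/-- The projection `P^{d-l} : ℝ^{d-s} → ℝ^{l-s}` recording the coefficients
`(h_{s+1}, …, h_l)` and forgetting the last `d - l` coefficients `(h_{l+1}, …, h_d)`,
where `l = ℓ(u)`.  (In the identification `coeffVec`, coordinate `i` is `h_{s+1+i}`, so
this keeps the first `l - s` coordinates.) -/
def projLow (d s : ℕ) (u : Composition d) (y : Fin (d - s) → ℝ) :
    Fin (u.length - s) → ℝ :=
  fun i => y ⟨i.val, by have h1 := u.length_le; have h2 := i.isLt; omega⟩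

/-!
Writing `h = ∏ i, (X - a i) ^ u i` with `a` weakly increasing parametrizes `H_s^u(f)` by a
closed set of root vectors (merging equal neighbouring roots yields a coarser composition).
The coefficients `h_1, …, h_l` determine the elementary symmetric functions of the roots up to
degree `l`, hence by Newton's identities the weighted power sums `∑ i, u i * a i ^ k` for
`k ≤ l`, and these determine a monotone `a`. As `h_1` and `h_2` already bound the roots, the
map `a ↦ (h_{s+1}, …, h_l)` is injective and proper on the parameter set, hence a closed
embedding; the projection of `H_s^u(f)` is then a homeomorphism onto its closed image.
-/

open Finset

namespace Composition

variable {n : ℕ} (c : Composition n)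

@[to_additive]
theorem prod_apply_index {M : Type*} [CommMonoid M] (G : Fin c.length → M) :
    ∏ j, G (c.index j) = ∏ i, G i ^ c.blocksFun i := by
  rw [← c.prod_prod_apply_embedding]
  simp [Composition.index_embedding]

theorem index_lt_index_iff {j j' : Fin n} :
    c.index j < c.index j' ↔ ∃ x ∈ c.sums, (j : ℕ) < x ∧ x ≤ j' := by
  have hj := c.lt_sizeUpTo_index_succ j
  have hj' := c.sizeUpTo_index_le j'
  simp only [Fin.val_succ] at hj
  constructor
  · intro h
    refine ⟨c.sizeUpTo (c.index j + 1), mem_image.2 ⟨c.index j, by simp, rfl⟩, hj,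
      (c.monotone_sizeUpTo (Nat.succ_le_of_lt h)).trans hj'⟩
  · rintro ⟨x, hx, hjx, hxj'⟩
    obtain ⟨q, hq, rfl⟩ := mem_image.1 hx
    have h1 := c.sizeUpTo_index_le j
    have h2 := c.lt_sizeUpTo_index_succ j'
    simp only [Fin.val_succ] at h2
    have hiq : (c.index j : ℕ) < q + 1 := c.monotone_sizeUpTo.reflect_lt (h1.trans_lt hjx)
    have hqi : q + 1 < c.index j' + 1 := c.monotone_sizeUpTo.reflect_lt (hxj'.trans_lt h2)
    exact Fin.lt_def.2 (by omega)

theorem monotone_index : Monotone c.index := fun j j' h => by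
  refine not_lt.1 fun hlt => ?_
  obtain ⟨x, -, hx, hx'⟩ := (c.index_lt_index_iff).1 hlt
  exact absurd (hx.trans_le hx') (not_lt.2 h)

theorem mem_sums_iff {x : ℕ} :
    x ∈ c.sums ↔ 0 < x ∧ ∃ i : Fin (c.length + 1), c.sizeUpTo i = x := by
  constructor
  · intro hx
    obtain ⟨i, hi, rfl⟩ := mem_image.1 hx
    exact ⟨(Nat.zero_le _).trans_lt (c.sizeUpTo_strict_mono (mem_range.1 hi)),
      ⟨i + 1, by simpa using mem_range.1 hi⟩, rfl⟩
  · rintro ⟨hx, i, rfl⟩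
    obtain ⟨q, hq⟩ : ∃ q, (i : ℕ) = q + 1 :=
      Nat.exists_eq_succ_of_ne_zero fun h => by simp [h] at hx
    exact mem_image.2 ⟨q, mem_range.2 (by omega), by rw [hq]⟩

theorem exists_sums_eq (T : Finset ℕ) (hT : ∀ x ∈ T, 0 < x ∧ x ≤ n)
    (hn : 0 < n → n ∈ T) : ∃ c : Composition n, c.sums = T := by
  let B : CompositionAsSet n :=
    { boundaries := univ.filter fun i : Fin (n + 1) => (i : ℕ) = 0 ∨ (i : ℕ) ∈ T
      zero_mem := by simp
      getLast_mem := by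
        rcases Nat.eq_zero_or_pos n with h | h
        · simp [h]
        · simp [hn h] }
  refine ⟨B.toComposition, Finset.ext fun x => ?_⟩
  have hB := B.toComposition_boundaries
  rw [mem_sums_iff]
  constructor
  · rintro ⟨hx, i, rfl⟩
    have hi : B.toComposition.boundary i ∈ B.toComposition.boundaries := by
      simp [Composition.boundaries]
    rw [hB] at hi
    simp only [B, Composition.boundary, mem_filter, mem_univ, true_and] at hi
    exact hi.resolve_left hx.ne'
  · intro hx
    have hxn := hT x hx
    have hmem : (⟨x, by omega⟩ : Fin (n + 1)) ∈ B.toComposition.boundaries := by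
      rw [hB]; simp [B, hx]
    obtain ⟨i, -, hi⟩ := Finset.mem_map.1 hmem
    exact ⟨hxn.1, i, congrArg Fin.val hi⟩

theorem self_mem_sums (hn : 0 < n) : n ∈ c.sums := by
  rw [mem_sums_iff]
  exact ⟨hn, Fin.last _, c.sizeUpTo_length⟩

theorem index_surjective : Function.Surjective c.index :=
  fun i => ⟨_, c.index_embedding i ⟨0, c.blocks_pos' i i.2⟩⟩

theorem exists_eq_comp_index {α : Type*} [Preorder α] (g : Fin n → α) (hg : Monotone g)
    (hblock : ∀ j j', c.index j = c.index j' → g j = g j') :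
    ∃ a : Fin c.length → α, Monotone a ∧ ∀ j, g j = a (c.index j) := by
  let first := Function.surjInv c.index_surjective
  have hfirst (i) : c.index (first i) = i := Function.surjInv_eq _ i
  refine ⟨fun i => g (first i), fun i i' hii' => ?_, fun j => hblock _ _ (hfirst _).symm⟩
  rcases le_total (first i) (first i') with h | h
  · exact hg h
  · have := c.monotone_index h
    rw [hfirst, hfirst] at this
    rw [le_antisymm hii' this]

end Composition

def rootPoly {d : ℕ} (u : Composition d) (a : Fin u.length → ℝ) : ℝ[X] :=
  ∏ i, (X - C (a i)) ^ u.blocksFun i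

section Parametrization

variable {d : ℕ} {u w : Composition d}

theorem rootPoly_eq_prod_index (a : Fin u.length → ℝ) :
    rootPoly u a = ∏ j, (X - C (a (u.index j))) :=
  (u.prod_apply_index fun i => X - C (a i)).symm

theorem CompLe.index_lt (hle : CompLe w u) {j j' : Fin d} (h : w.index j < w.index j') :
    u.index j < u.index j' := by
  obtain ⟨x, hx, hjx, hxj'⟩ := (w.index_lt_index_iff).1 h
  exact (u.index_lt_index_iff).2 ⟨x, hle hx, hjx, hxj'⟩

theorem exists_monotone_rootPoly_eq_of_compLe (hle : CompLe w u) (b : Fin w.length → ℝ)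
    (hb : Monotone b) : ∃ a, Monotone a ∧ rootPoly w b = rootPoly u a := by
  have hblock (j j' : Fin d) (h : u.index j = u.index j') : b (w.index j) = b (w.index j') :=
    congrArg b <| le_antisymm (not_lt.1 fun hlt => (hle.index_lt hlt).ne' h)
      (not_lt.1 fun hlt => (hle.index_lt hlt).ne h)
  obtain ⟨a, ha, hba⟩ :=
    u.exists_eq_comp_index (fun j => b (w.index j)) (hb.comp w.monotone_index) hblock
  exact ⟨a, ha, by simp only [rootPoly_eq_prod_index, hba]⟩

/-- The boundaries of `w` are the points of `u.sums` where `a ∘ u.index` strictly jumps. -/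
theorem exists_compLe_hasComposition_of_monotone (a : Fin u.length → ℝ) (ha : Monotone a) :
    ∃ w, CompLe w u ∧ HasComposition (rootPoly u a) w := by
  set g : Fin d → ℝ := fun j => a (u.index j) with hg_def
  have hg : Monotone g := ha.comp u.monotone_index
  let IsJump (x : ℕ) : Prop := ∀ j j' : Fin d, (j : ℕ) < x → x ≤ j' → g j < g j'
  obtain ⟨w, hw⟩ := Composition.exists_sums_eq (u.sums.filter IsJump)
    (fun x hx => by
      obtain ⟨hpos, i, rfl⟩ := (u.mem_sums_iff).1 (mem_filter.1 hx).1
      exact ⟨hpos, u.sizeUpTo_le i⟩)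
    (fun hd => mem_filter.2 ⟨u.self_mem_sums hd, fun _ j' _ h => absurd j'.2 (not_lt.2 h)⟩)
  have exists_jump {j j' : Fin d} (h : g j < g j') :
      ∃ x ∈ w.sums, (j : ℕ) < x ∧ x ≤ j' := by
    have hne : (univ.filter fun k => g j < g k).Nonempty := ⟨j', by simpa using h⟩
    set m := (univ.filter fun k => g j < g k).min' hne
    have hm : g j < g m := (mem_filter.1 (min'_mem _ hne)).2
    have hbefore (k : Fin d) (hk : k < m) : g k ≤ g j :=
      not_lt.1 fun hlt => (min'_le _ k (by simpa using hlt)).not_gt hk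
    have hjm : j < m := hg.reflect_lt hm
    have hpred : (m : ℕ) - 1 < d := by omega
    have hu : u.index ⟨m - 1, hpred⟩ < u.index m :=
      ha.reflect_lt ((hbefore ⟨m - 1, hpred⟩ (Fin.lt_def.2 (by simp; omega))).trans_lt hm)
    obtain ⟨y, hy, hy1, hy2⟩ := (u.index_lt_index_iff).1 hu
    obtain rfl : y = m := by simp at hy1; omega
    refine ⟨m, hw ▸ mem_filter.2 ⟨hy, fun k k' hk hk' => ?_⟩, hjm,
      min'_le _ j' (mem_filter.2 ⟨mem_univ _, h⟩)⟩
    exact (hbefore k (Fin.lt_def.2 hk)).trans_lt (hm.trans_le (hg (Fin.le_def.2 hk')))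
  have hblock (j j' : Fin d) (h : w.index j = w.index j') : g j = g j' := by
    by_contra hne
    rcases lt_or_gt_of_ne hne with hlt | hlt
    · exact h.not_lt ((w.index_lt_index_iff).2 (exists_jump hlt))
    · exact h.not_gt ((w.index_lt_index_iff).2 (exists_jump hlt))
  obtain ⟨b, -, hgb⟩ := w.exists_eq_comp_index g hg hblock
  have hb : StrictMono b := fun i i' hii' => by
    obtain ⟨j, rfl⟩ := w.index_surjective i
    obtain ⟨j', rfl⟩ := w.index_surjective i'
    obtain ⟨x, hx, hjx, hxj'⟩ := (w.index_lt_index_iff).1 hii'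
    rw [hw] at hx
    rw [← hgb, ← hgb]
    exact (mem_filter.1 hx).2 j j' hjx hxj'
  refine ⟨w, by rw [CompLe, hw]; exact filter_subset _ _, b, hb, ?_⟩
  change rootPoly u a = rootPoly w b
  simp only [rootPoly_eq_prod_index, ← hgb, hg_def]

theorem exists_compLe_hasComposition_iff (h : ℝ[X]) :
    (∃ w, CompLe w u ∧ HasComposition h w) ↔ ∃ a, Monotone a ∧ h = rootPoly u a := by
  constructor
  · rintro ⟨w, hle, b, hb, rfl⟩
    exact exists_monotone_rootPoly_eq_of_compLe hle b hb.monotone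
  · rintro ⟨a, ha, rfl⟩
    exact exists_compLe_hasComposition_of_monotone a ha

end Parametrization

namespace MvPolynomial

variable {σ R : Type*} [CommRing R] [Fintype σ]

theorem eval_psum_eq_of_eval_esymm_eq (x y : σ → R) (n : ℕ)
    (h : ∀ k ≤ n, eval x (esymm σ R k) = eval y (esymm σ R k)) :
    ∀ k ≤ n, eval x (psum σ R k) = eval y (psum σ R k) := by
  intro k
  induction k using Nat.strong_induction_on with
  | _ k ih =>
    intro hk
    rcases Nat.eq_zero_or_pos k with rfl | hpos
    · simp [psum_zero]
    simp only [psum_eq_mul_esymm_sub_sum σ R k hpos, map_sub, map_mul, map_pow, map_neg,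
      map_one, map_natCast, map_sum, h k hk]
    congr 1
    refine sum_congr rfl fun p hp => ?_
    simp only [mem_filter, HasAntidiagonal.mem_antidiagonal, Set.mem_Ioo] at hp
    rw [h p.1 (by omega), ih p.2 (by omega) (by omega)]

variable (σ R)

theorem psum_two : psum σ R 2 = esymm σ R 1 ^ 2 - 2 * esymm σ R 2 := by
  have hfilter : (antidiagonal 2).filter (fun p => p.1 ∈ Set.Ioo 0 2) = {(1, 1)} := by
    ext p
    simp only [mem_filter, HasAntidiagonal.mem_antidiagonal, Set.mem_Ioo, mem_singleton,
      Prod.ext_iff]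
    omega
  rw [psum_eq_mul_esymm_sub_sum σ R 2 two_pos, hfilter, sum_singleton, psum_one,
    ← esymm_one σ R]
  ring

end MvPolynomial

section Vieta

variable {d : ℕ} (u : Composition d) (a : Fin u.length → ℝ)

def negRoots : Fin d → ℝ := fun j => -a (u.index j)

theorem rootPoly_eq_map : rootPoly u a =
    (∏ j : Fin d, (X + C (MvPolynomial.X j))).map (MvPolynomial.eval (negRoots u a)) := by
  simp [rootPoly_eq_prod_index, Polynomial.map_prod, negRoots, sub_eq_add_neg]

theorem coeff_rootPoly_sub {k : ℕ} (hk : k ≤ d) :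
    (rootPoly u a).coeff (d - k) =
      MvPolynomial.eval (negRoots u a) (MvPolynomial.esymm (Fin d) ℝ k) := by
  rw [rootPoly_eq_map, coeff_map, MvPolynomial.prod_X_add_C_coeff _ _ _ (by simp)]
  simp [Nat.sub_sub_self hk]

theorem continuous_coeff_rootPoly (j : ℕ) :
    Continuous fun a : Fin u.length → ℝ => (rootPoly u a).coeff j := by
  simp_rw [rootPoly_eq_map, coeff_map]
  exact (MvPolynomial.continuous_eval _).comp (continuous_pi fun j => (continuous_apply _).neg)

theorem rootPoly_eq_multiset_prod :
    rootPoly u a = ((univ.val.map fun j => a (u.index j)).map fun t => X - C t).prod := by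
  rw [rootPoly_eq_prod_index, Finset.prod_eq_multiset_prod, Multiset.map_map]
  rfl

theorem monic_rootPoly : (rootPoly u a).Monic := by
  rw [rootPoly_eq_prod_index]
  exact monic_prod_of_monic _ _ fun j _ => monic_X_sub_C _

theorem natDegree_rootPoly : (rootPoly u a).natDegree = d := by
  rw [rootPoly_eq_multiset_prod, natDegree_multiset_prod_X_sub_C_eq_card]
  simp

theorem hyperbolic_rootPoly : Hyperbolic (rootPoly u a) := by
  rw [Hyperbolic, natDegree_rootPoly, rootPoly_eq_multiset_prod,
    roots_multiset_prod_X_sub_C]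
  simp

theorem eval_psum_negRoots (k : ℕ) :
    MvPolynomial.eval (negRoots u a) (MvPolynomial.psum (Fin d) ℝ k) =
      (-1) ^ k * ∑ i, (u.blocksFun i : ℝ) * a i ^ k := by
  simp only [MvPolynomial.psum, map_sum, map_pow, MvPolynomial.eval_X, negRoots]
  rw [u.sum_apply_index fun i => (-a i) ^ k, mul_sum]
  exact sum_congr rfl fun i _ => by rw [nsmul_eq_mul, neg_pow]; ring

end Vieta

section Moments

/-- The induction adds the largest index `m` and multiplies by the linear factor `lo m - X`
exactly when the sign changes at `m`; the last conjunct is the invariant that makes this work. -/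
theorem exists_polynomial_sign_on_intervals {ι : Type*} [LinearOrder ι] (lo hi σ : ι → ℝ)
    (K : Finset ι) (hσ : ∀ i ∈ K, σ i = 1 ∨ σ i = -1)
    (hlo : ∀ i ∈ K, ∀ j ∈ K, i ≤ j → lo i ≤ lo j)
    (hsep : ∀ i ∈ K, ∀ j ∈ K, i < j → σ i ≠ σ j → hi i ≤ lo j)
    {m : ι} (hm : m ∈ K) (hmax : ∀ i ∈ K, i ≤ m) :
    ∃ Q : ℝ[X], Q.natDegree < #K ∧
      (∀ j ∈ K, ∀ t ∈ Set.Ioo (lo j) (hi j), 0 < σ j * Q.eval t) ∧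
      ∀ t, lo m < t → 0 < σ m * Q.eval t := by
  classical
  induction K using Finset.induction_on_max generalizing m with
  | empty => simp at hm
  | insert m' K hlt ih =>
    obtain rfl : m = m' := by
      rcases mem_insert.1 hm with h | h
      · exact h
      · exact absurd (hmax m' (mem_insert_self _ _)) (not_le.2 (hlt m h))
    have hmK : m ∉ K := fun h => lt_irrefl m (hlt m h)
    rcases K.eq_empty_or_nonempty with rfl | hK
    · have hsq : 0 < σ m * σ m := by rcases hσ m hm with h | h <;> rw [h] <;> norm_num
      refine ⟨C (σ m), by simp, fun j hj t _ => ?_, fun t _ => by simpa using hsq⟩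
      obtain rfl := mem_singleton.1 hj
      simpa using hsq
    obtain ⟨Q, hdeg, hpos, htail⟩ := ih (fun i hi => hσ i (mem_insert_of_mem hi))
      (fun i hi j hj => hlo i (mem_insert_of_mem hi) j (mem_insert_of_mem hj))
      (fun i hi j hj => hsep i (mem_insert_of_mem hi) j (mem_insert_of_mem hj))
      (K.max'_mem hK) (fun i hi => K.le_max' i hi)
    set m₀ := K.max' hK
    have hm₀ : m₀ < m := hlt _ (K.max'_mem hK)
    have hlo₀ : lo m₀ ≤ lo m := hlo _ (mem_insert_of_mem (K.max'_mem hK)) _ hm hm₀.le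
    have hcard : #(insert m K) = #K + 1 := card_insert_of_notMem hmK
    by_cases hσeq : σ m = σ m₀
    · refine ⟨Q, by omega, fun j hj t ht => ?_,
        fun t ht => hσeq ▸ htail t (hlo₀.trans_lt ht)⟩
      rcases mem_insert.1 hj with rfl | hj
      · exact hσeq ▸ htail t (hlo₀.trans_lt ht.1)
      · exact hpos j hj t ht
    have hflip : σ m = -σ m₀ := by
      rcases hσ m hm with h | h <;>
        rcases hσ m₀ (mem_insert_of_mem (K.max'_mem hK)) with h' | h' <;> simp_all
    have htail' (t : ℝ) (ht : lo m < t) : 0 < σ m * (Q * (C (lo m) - X)).eval t := by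
      have := mul_pos (htail t (hlo₀.trans_lt ht)) (sub_pos.2 ht)
      rw [eval_mul, eval_sub, eval_C, eval_X, hflip]
      linarith
    refine ⟨Q * (C (lo m) - X), ?_, fun j hj t ht => ?_, htail'⟩
    · have : (C (lo m) - X).natDegree ≤ 1 := by compute_degree
      have := natDegree_mul_le (p := Q) (q := C (lo m) - X)
      omega
    rcases mem_insert.1 hj with rfl | hj
    · exact htail' t ht.1
    have hhi : hi j ≤ lo m := by
      by_cases hσj : σ j = σ m
      · have hjm₀ : j < m₀ := lt_of_le_of_ne (K.le_max' j hj) fun h => hσeq (h ▸ hσj).symm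
        exact (hsep j (mem_insert_of_mem hj) m₀ (mem_insert_of_mem (K.max'_mem hK)) hjm₀
          fun h => hσeq (hσj.symm.trans h)).trans hlo₀
      · exact hsep j (mem_insert_of_mem hj) m hm (hlt j hj) hσj
    rw [eval_mul, eval_sub, eval_C, eval_X, ← mul_assoc]
    exact mul_pos (hpos j hj t ht) (sub_pos.2 (ht.2.trans_le hhi))

theorem integral_eval_eq_sum (Q : ℝ[X]) (a b : ℝ) :
    ∫ t in a..b, Q.eval t =
      ∑ k ∈ range (Q.natDegree + 1), Q.coeff k * ((b ^ (k + 1) - a ^ (k + 1)) / (k + 1)) := by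
  simp_rw [eval_eq_sum_range]
  rw [intervalIntegral.integral_finsetSum fun k _ =>
    ((continuous_pow k).const_mul (Q.coeff k)).intervalIntegrable (μ := MeasureTheory.volume) a b]
  simp [integral_pow]

theorem integral_eval_pos_of_sign {Q : ℝ[X]} {a b : ℝ} (hab : a ≠ b)
    (hQ : ∀ t ∈ Set.Ioo (min a b) (max a b), 0 < (if a < b then 1 else -1) * Q.eval t) :
    0 < ∫ t in a..b, Q.eval t := by
  have hint (x y : ℝ) : IntervalIntegrable (fun t => Q.eval t) MeasureTheory.volume x y :=
    Q.continuous.intervalIntegrable x y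
  rcases lt_or_gt_of_ne hab with h | h
  · refine intervalIntegral.intervalIntegral_pos_of_pos_on (hint a b) (fun t ht => ?_) h
    simpa [h, min_eq_left h.le, max_eq_right h.le] using hQ t (by simpa [h.le] using ht)
  · have : 0 < ∫ t in b..a, -Q.eval t :=
      intervalIntegral.intervalIntegral_pos_of_pos_on (hint b a).neg (fun t ht => by
        simpa [h, not_lt.2 h.le, min_eq_right h.le, max_eq_left h.le] using
          hQ t (by simpa [h.le] using ht)) h
    rw [intervalIntegral.integral_neg] at this
    rw [intervalIntegral.integral_symm]
    linarith

/-- If `a ≠ b`, the polynomial `Q` of degree `< card ι` that has the sign of `b i - a i`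
between `a i` and `b i` gives `∑ i, w i * ∫ t in a i..b i, Q t > 0`, while that sum is a
combination of differences of power sums. -/
theorem eq_of_monotone_of_sum_pow_eq {ι : Type*} [Fintype ι] [LinearOrder ι] (w : ι → ℝ)
    (hw : ∀ i, 0 < w i) {a b : ι → ℝ} (ha : Monotone a) (hb : Monotone b)
    (hpow : ∀ k, 1 ≤ k → k ≤ Fintype.card ι →
      ∑ i, w i * a i ^ k = ∑ i, w i * b i ^ k) :
    a = b := by
  classical
  by_contra hne
  set K := univ.filter fun i => a i ≠ b i
  have hK : K.Nonempty := by
    obtain ⟨i, hi⟩ := Function.ne_iff.1 hne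
    exact ⟨i, by simpa [K] using hi⟩
  set σ : ι → ℝ := fun i => if a i < b i then 1 else -1
  have hsep : ∀ i ∈ K, ∀ j ∈ K, i < j → σ i ≠ σ j →
      max (a i) (b i) ≤ min (a j) (b j) := by
    intro i hi j hj hij hσ
    have hi' : a i ≠ b i := (mem_filter.1 hi).2
    have hj' : a j ≠ b j := (mem_filter.1 hj).2
    by_cases h : a i < b i <;> by_cases h' : a j < b j <;> simp only [σ, h, h'] at hσ <;>
      norm_num at hσ
    · have := hb hij.le
      simp only [max_eq_right h.le, min_eq_right (lt_of_le_of_ne (not_lt.1 h') hj'.symm).le]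
      exact this
    · have := ha hij.le
      simp only [max_eq_left (lt_of_le_of_ne (not_lt.1 h) hi'.symm).le, min_eq_left h'.le]
      exact this
  obtain ⟨Q, hdeg, hpos, -⟩ := exists_polynomial_sign_on_intervals (fun i => min (a i) (b i))
    (fun i => max (a i) (b i)) σ K (fun i _ => by by_cases h : a i < b i <;> simp [σ, h])
    (fun i _ j _ hij => min_le_min (ha hij) (hb hij)) hsep (K.max'_mem hK)
    (fun i hi => K.le_max' i hi)
  have hterm_pos (i) (hi : i ∈ K) : 0 < w i * ∫ t in a i..b i, Q.eval t :=
    mul_pos (hw i) (integral_eval_pos_of_sign (mem_filter.1 hi).2 (hpos i hi))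
  have hterm_nonneg (i) : 0 ≤ w i * ∫ t in a i..b i, Q.eval t := by
    by_cases hi : i ∈ K
    · exact (hterm_pos i hi).le
    · have : a i = b i := by simpa [K] using hi
      simp [this]
  have hsum : ∑ i, w i * ∫ t in a i..b i, Q.eval t = 0 := by
    simp_rw [integral_eval_eq_sum, mul_sum]
    rw [sum_comm]
    refine sum_eq_zero fun k hk => ?_
    have hkK : k + 1 ≤ Fintype.card ι := by
      have := card_le_univ K
      have := mem_range.1 hk
      omega
    calc ∑ i, w i * (Q.coeff k * ((b i ^ (k + 1) - a i ^ (k + 1)) / (k + 1)))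
        = Q.coeff k / (k + 1) *
            (∑ i, w i * b i ^ (k + 1) - ∑ i, w i * a i ^ (k + 1)) := by
          rw [mul_sub, mul_sum, mul_sum, ← sum_sub_distrib]
          exact sum_congr rfl fun i _ => by ring
      _ = 0 := by rw [hpow (k + 1) (by omega) hkK, sub_self, mul_zero]
  obtain ⟨i, hi⟩ := hK
  have := sum_pos' (fun i _ => hterm_nonneg i) ⟨i, mem_univ i, hterm_pos i hi⟩
  linarith

end Moments

section Topology

open Topology

theorem isClosedEmbedding_domRestrict_of_isBounded_preimage {E F : Type*} [MetricSpace E]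
    [ProperSpace E] [MetricSpace F] {A : Set E} (hA : IsClosed A) {G : E → F}
    (hG : Continuous G) (hinj : A.InjOn G)
    (hbdd : ∀ K, Bornology.IsBounded K → Bornology.IsBounded (A ∩ G ⁻¹' K)) :
    IsClosedEmbedding (A.domRestrict G) := by
  have hcont : Continuous (A.domRestrict G) := hG.comp continuous_subtype_val
  have hproper : IsProperMap (A.domRestrict G) := by
    refine isProperMap_iff_isCompact_preimage.2 ⟨hcont, fun K hK => ?_⟩
    have himage : Subtype.val '' (A.domRestrict G ⁻¹' K) = A ∩ G ⁻¹' K := by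
      ext x
      simp [Set.domRestrict, and_comm]
    rw [Subtype.isCompact_iff, himage]
    exact Metric.isCompact_of_isClosed_isBounded (hA.inter (hK.isClosed.preimage hG))
      (hbdd K hK.isBounded)
  exact .of_continuous_injective_isClosedMap hcont hinj.injective hproper.isClosedMap

theorem exists_homeomorph_image_of_isEmbedding_domRestrict {X Y Z : Type*} [TopologicalSpace X]
    [TopologicalSpace Y] [TopologicalSpace Z] {A : Set X} {F : X → Y} {p : Y → Z}
    (hF : Continuous F) (hp : Continuous p) (hpF : IsEmbedding (A.domRestrict (p ∘ F))) :
    ∃ e : ↥(F '' A) ≃ₜ ↥(p '' (F '' A)), ∀ y, (e y : Z) = p y := by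
  have hF' : IsEmbedding (A.domRestrict F) := hpF.of_comp (hF.comp continuous_subtype_val) hp
  let e₁ : A ≃ₜ F '' A := hF'.toHomeomorph.trans (.setCongr (Set.range_domRestrict F A))
  let e₂ : A ≃ₜ p '' (F '' A) := hpF.toHomeomorph.trans
    (.setCongr (by rw [Set.range_domRestrict, Set.image_comp]))
  refine ⟨e₁.symm.trans e₂, fun y => ?_⟩
  obtain ⟨x, rfl⟩ := e₁.surjective y
  rw [Homeomorph.trans_apply, Homeomorph.symm_apply_apply]
  rfl

end Topology

section Strata

variable {d s : ℕ} {f : ℝ[X]} {u : Composition d}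

variable (d s f u) in
def paramSet : Set (Fin u.length → ℝ) :=
  {a | Monotone a ∧ ∀ j, d - s ≤ j → (rootPoly u a).coeff j = f.coeff j}

theorem isClosed_paramSet : IsClosed (paramSet d s f u) := by
  refine isClosed_monotone.inter ?_
  change IsClosed {a | ∀ j, d - s ≤ j → (rootPoly u a).coeff j = f.coeff j}
  simp only [Set.ofPred_forall]
  exact isClosed_iInter fun j => isClosed_iInter fun _ =>
    isClosed_eq (continuous_coeff_rootPoly u j) continuous_const

theorem HSu_eq_image_paramSet : HSu d s f u = rootPoly u '' paramSet d s f u := by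
  ext h
  simp only [HSu, Hset, exists_compLe_hasComposition_iff, Set.mem_ofPred_eq, Set.mem_image]
  constructor
  · rintro ⟨⟨-, -, -, hcoeff⟩, a, ha, rfl⟩
    exact ⟨a, ⟨ha, hcoeff⟩, rfl⟩
  · rintro ⟨a, ⟨ha, hcoeff⟩, rfl⟩
    exact ⟨⟨monic_rootPoly u a, natDegree_rootPoly u a, hyperbolic_rootPoly u a, hcoeff⟩,
      a, ha, rfl⟩

theorem projLow_coeffVec_apply (h : ℝ[X]) {k : ℕ} (hsk : s < k) (hk : k ≤ u.length) :
    projLow d s u (coeffVec d s h) ⟨k - s - 1, by omega⟩ = h.coeff (d - k) := by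
  have := u.length_le
  simp only [projLow, coeffVec]
  congr 1
  omega

theorem injOn_paramSet :
    (paramSet d s f u).InjOn fun a => projLow d s u (coeffVec d s (rootPoly u a)) := by
  intro a ha b hb hab
  have hesymm : ∀ k ≤ u.length, MvPolynomial.eval (negRoots u a) (MvPolynomial.esymm _ ℝ k) =
      MvPolynomial.eval (negRoots u b) (MvPolynomial.esymm _ ℝ k) := by
    intro k hk
    rcases Nat.eq_zero_or_pos k with rfl | hk0
    · simp [MvPolynomial.esymm_zero]
    have hkd := hk.trans u.length_le
    rw [← coeff_rootPoly_sub u a hkd, ← coeff_rootPoly_sub u b hkd]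
    rcases le_or_gt k s with hks | hks
    · rw [ha.2 _ (by omega), hb.2 _ (by omega)]
    · rw [← projLow_coeffVec_apply _ hks hk, ← projLow_coeffVec_apply _ hks hk]
      exact congrFun hab _
  refine eq_of_monotone_of_sum_pow_eq (fun i => (u.blocksFun i : ℝ))
    (fun i => Nat.cast_pos.2 (u.one_le_blocksFun i)) ha.1 hb.1 fun k _ hk => ?_
  have := MvPolynomial.eval_psum_eq_of_eval_esymm_eq _ _ _ hesymm k (by simpa using hk)
  rw [eval_psum_negRoots, eval_psum_negRoots] at this
  exact mul_left_cancel₀ (pow_ne_zero _ (by norm_num)) this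

/-- Only the top two coefficients are needed: with one block, `a` is read off `coeff (d - 1)`;
otherwise `∑ j, (negRoots u a j) ^ 2 = coeff (d - 1) ^ 2 - 2 * coeff (d - 2)`. -/
theorem sq_le_of_abs_coeff_le (a : Fin u.length → ℝ) {M : ℝ}
    (hM : ∀ k, 1 ≤ k → k ≤ min u.length 2 → |(rootPoly u a).coeff (d - k)| ≤ M)
    (i : Fin u.length) : a i ^ 2 ≤ M ^ 2 + 2 * M := by
  have hl := u.length_le
  have hi := i.2
  have h1 := hM 1 le_rfl (by omega)
  have hM0 : 0 ≤ M := (abs_nonneg _).trans h1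
  have hc1 := coeff_rootPoly_sub u a (k := 1) (by omega)
  rcases lt_or_ge u.length 2 with hl2 | hl2
  · have hindex (j : Fin d) : u.index j = i := Fin.ext (by omega)
    simp only [MvPolynomial.esymm_one, map_sum, MvPolynomial.eval_X, negRoots, hindex,
      sum_const, card_univ, Fintype.card_fin, nsmul_eq_mul] at hc1
    have hd : (1 : ℝ) ≤ d := by exact_mod_cast (show 1 ≤ d by omega)
    rw [hc1, abs_le] at h1
    have hsq : (d * -a i) ^ 2 ≤ M ^ 2 := sq_le_sq' h1.1 h1.2
    nlinarith [mul_le_mul_of_nonneg_right (one_le_pow₀ (n := 2) hd) (sq_nonneg (a i))]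
  · have h2 := hM 2 (by norm_num) (by omega)
    have hc2 := coeff_rootPoly_sub u a (k := 2) (by omega)
    have hp2 := congrArg (MvPolynomial.eval (negRoots u a)) (MvPolynomial.psum_two (Fin d) ℝ)
    simp only [map_sub, map_mul, map_pow, map_ofNat, ← hc1, ← hc2, MvPolynomial.psum, map_sum,
      MvPolynomial.eval_X] at hp2
    have hsq : a i ^ 2 ≤ ∑ j, negRoots u a j ^ 2 := by
      have := single_le_sum (f := fun j => negRoots u a j ^ 2) (fun j _ => sq_nonneg _)
        (mem_univ (u.embedding i ⟨0, u.blocks_pos' i i.2⟩))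
      simpa [negRoots, Composition.index_embedding] using this
    rw [abs_le] at h1 h2
    nlinarith

theorem isBounded_paramSet_inter_preimage {K : Set (Fin (u.length - s) → ℝ)}
    (hK : Bornology.IsBounded K) :
    Bornology.IsBounded (paramSet d s f u ∩
      (fun a => projLow d s u (coeffVec d s (rootPoly u a))) ⁻¹' K) := by
  obtain ⟨R, hR⟩ := hK.subset_closedBall 0
  set M := R + |f.coeff (d - 1)| + |f.coeff (d - 2)|
  refine (Metric.isBounded_closedBall (x := 0) (r := √(M ^ 2 + 2 * M))).subset ?_
  rintro a ⟨ha, haK⟩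
  have hnorm := mem_closedBall_zero_iff.1 (hR haK)
  have hcoeff :
      ∀ k, 1 ≤ k → k ≤ min u.length 2 → |(rootPoly u a).coeff (d - k)| ≤ M := by
    intro k hk1 hk2
    obtain ⟨hkl, hk2⟩ := le_min_iff.1 hk2
    have hf : |f.coeff (d - k)| ≤ |f.coeff (d - 1)| + |f.coeff (d - 2)| := by
      interval_cases k <;> simp
    rcases le_or_gt k s with hks | hks
    · rw [ha.2 _ (by omega)]
      linarith [(norm_nonneg _).trans hnorm]
    · rw [← projLow_coeffVec_apply (u := u) _ hks hkl, ← Real.norm_eq_abs]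
      linarith [norm_le_pi_norm (projLow d s u (coeffVec d s (rootPoly u a)))
          ⟨k - s - 1, by omega⟩,
        abs_nonneg (f.coeff (d - 1)), abs_nonneg (f.coeff (d - 2))]
  rw [mem_closedBall_zero_iff, pi_norm_le_iff_of_nonneg (Real.sqrt_nonneg _)]
  exact fun i => (Real.norm_eq_abs _).trans_le (Real.abs_le_sqrt (sq_le_of_abs_coeff_le a hcoeff i))

end Strata

theorem projection_homeomorph_and_closed_general (d s : ℕ) (f : ℝ[X]) (u : Composition d) :
    (∃ e : ↥(strataSet d s f u) ≃ₜ ↥(projLow d s u '' strataSet d s f u),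
      ∀ x : ↥(strataSet d s f u),
        (e x : Fin (u.length - s) → ℝ) = projLow d s u (x : Fin (d - s) → ℝ)) ∧
    IsClosed (projLow d s u '' strataSet d s f u) := by
  have hF : Continuous fun a => coeffVec d s (rootPoly u a) :=
    continuous_pi fun _ => continuous_coeff_rootPoly u _
  have hp : Continuous (projLow d s u) := continuous_pi fun _ => continuous_apply _
  have hemb := isClosedEmbedding_domRestrict_of_isBounded_preimage isClosed_paramSet (hp.comp hF)
    injOn_paramSet fun _ hK => isBounded_paramSet_inter_preimage (f := f) hK
  have hstrata :
      strataSet d s f u = (fun a => coeffVec d s (rootPoly u a)) '' paramSet d s f u := by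
    rw [strataSet, HSu_eq_image_paramSet, Set.image_image]
  rw [hstrata]
  refine ⟨exists_homeomorph_image_of_isEmbedding_domRestrict hF hp hemb.isEmbedding, ?_⟩
  rw [← Set.image_comp, ← Set.range_domRestrict]
  exact hemb.isClosed_range

/-- If `u` is a composition of `d` with `l = ℓ(u) > s`, then the projection
`P^{d-l} : H_s^u(f) → ℝ^{l-s}` recording the coefficients `h_{s+1}, …, h_l` is a
homeomorphism onto its image, and the image `P^{d-l}(H_s^u(f))` is closed in `ℝ^{l-s}`. -/
theorem projection_homeomorph_and_closed (d s : ℕ) (hd : 1 ≤ d) (hsd : s ≤ d)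
    (f : ℝ[X]) (hmon : f.Monic) (hdeg : f.natDegree = d) (hhyp : Hyperbolic f)
    (u : Composition d) (hlu : s < u.length) :
    (∃ e : ↥(strataSet d s f u) ≃ₜ ↥(projLow d s u '' strataSet d s f u),
      ∀ x : ↥(strataSet d s f u),
        (e x : Fin (u.length - s) → ℝ) = projLow d s u (x : Fin (d - s) → ℝ)) ∧
    IsClosed (projLow d s u '' strataSet d s f u) :=
  projection_homeomorph_and_closed_general d s f u
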